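/- arXiv:1501.00876 — 2 statements merged into one kernel-verified Lean document; each statement's English description precedes it below -/
import Mathlib

section
/- The Minkowski question mark function is continuous on [0,1]. -/
open MeasureTheory Set

/-- The Gauss map `x ↦ 1/x mod 1` (with `0 ↦ 0`). -/
noncomputable def gaussMap (x : ℝ) : ℝ := if x = 0 then 0 else Int.fract x⁻¹

/-- The `(k+1)`-st continued fraction partial quotient `a_{k+1}(x)`. -/
noncomputable def cfDigit (k : ℕ) (x : ℝ) : ℕ := ⌊(gaussMap^[k] x)⁻¹⌋₊

/-- `cfSum n x = a_1(x) + ⋯ + a_n(x)`. -/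
noncomputable def cfSum (n : ℕ) (x : ℝ) : ℕ := ∑ i ∈ Finset.range n, cfDigit i x

/-- Minkowski's question mark function, defined by Salem's series
`?(x) = Σ_{k≥1} (-1)^{k-1} 2^{1-(a_1+⋯+a_k)}`, which is a finite sum for rational `x`
(the terms are cut off once the Gauss-map orbit reaches `0`). -/
noncomputable def mink (x : ℝ) : ℝ :=
  ∑' k : ℕ, if gaussMap^[k] x = 0 then 0 else
    (-1 : ℝ) ^ k * (2 : ℝ) ^ ((1 : ℤ) - (cfSum (k + 1) x : ℤ))

/-!
Peeling off the first partial quotient of Salem's series gives, for `0 < x ≤ 1`,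
`?(x) = 2^{-a₁(x)} (2 - ?(T x))` with `T` the Gauss map. So `?` is a fixed point on `[0,1]` of the
operator `Φ f (x) = 2^{-a₁(x)} (2 - f (T x))`, `Φ f 0 = 0`, which halves sup-distances on `[0,1]`.
If `f` is continuous on `[0,1]` with `f 0 = 0` and `f 1 = 1`, then so is `Φ f`: on each piece
`[1/(n+2), 1/(n+1)]` it equals `2^{-(n+1)} (2 - f (1/x - (n+1)))` (at the left end because
`f 0 = 0` and `f 1 = 1`), and near `0` it is `O(x)`. The iterates of `Φ` on the identity are
therefore continuous and converge uniformly to `?`.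
-/

open Filter Topology

lemma gaussMap_eq_inv_sub_floor {x : ℝ} (hx : 0 ≤ x) : gaussMap x = x⁻¹ - ⌊x⁻¹⌋₊ := by
  rcases hx.eq_or_lt with rfl | hx
  · simp [gaussMap]
  · rw [gaussMap, if_neg hx.ne', Int.fract, ← Int.natCast_floor_eq_floor (inv_nonneg.2 hx.le)]
    norm_cast

lemma gaussMap_mem_Ico (x : ℝ) : gaussMap x ∈ Ico (0 : ℝ) 1 := by
  unfold gaussMap
  split
  · exact ⟨le_rfl, one_pos⟩
  · exact ⟨Int.fract_nonneg _, Int.fract_lt_one _⟩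

lemma iterate_gaussMap_zero (k : ℕ) : gaussMap^[k] 0 = 0 :=
  Function.iterate_fixed (by simp [gaussMap]) k

lemma iterate_gaussMap_mem_Icc {x : ℝ} (hx : x ∈ Icc (0 : ℝ) 1) :
    ∀ k, gaussMap^[k] x ∈ Icc (0 : ℝ) 1
  | 0 => hx
  | k + 1 => by
    rw [Function.iterate_succ_apply']
    exact Ico_subset_Icc_self (gaussMap_mem_Ico _)

lemma iterate_gaussMap_ne_zero_of_le {x : ℝ} {j k : ℕ} (hjk : j ≤ k)
    (hk : gaussMap^[k] x ≠ 0) : gaussMap^[j] x ≠ 0 := by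
  obtain ⟨m, rfl⟩ := Nat.exists_eq_add_of_le hjk
  intro hj
  rw [add_comm, Function.iterate_add_apply, hj, iterate_gaussMap_zero] at hk
  exact hk rfl

lemma one_le_cfDigit {x : ℝ} (hx : x ∈ Icc (0 : ℝ) 1) {k : ℕ} (hk : gaussMap^[k] x ≠ 0) :
    1 ≤ cfDigit k x := by
  obtain ⟨h0, h1⟩ := iterate_gaussMap_mem_Icc hx k
  exact Nat.le_floor (by exact_mod_cast one_le_inv_iff₀.2 ⟨h0.lt_of_ne' hk, h1⟩)

lemma succ_le_cfSum {x : ℝ} (hx : x ∈ Icc (0 : ℝ) 1) {k : ℕ} (hk : gaussMap^[k] x ≠ 0) :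
    k + 1 ≤ cfSum (k + 1) x := by
  calc k + 1 = ∑ _i ∈ Finset.range (k + 1), 1 := by simp
    _ ≤ cfSum (k + 1) x := Finset.sum_le_sum fun i hi =>
      one_le_cfDigit hx (iterate_gaussMap_ne_zero_of_le (Finset.mem_range_succ_iff.1 hi) hk)

lemma cfSum_succ (n : ℕ) (x : ℝ) : cfSum (n + 1) x = ⌊x⁻¹⌋₊ + cfSum n (gaussMap x) := by
  simp [cfSum, cfDigit, Finset.sum_range_succ', add_comm]

noncomputable def minkTerm (x : ℝ) (k : ℕ) : ℝ :=
  if gaussMap^[k] x = 0 then 0 else (-1 : ℝ) ^ k * (2 : ℝ) ^ ((1 : ℤ) - (cfSum (k + 1) x : ℤ))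

lemma mink_eq_tsum_minkTerm (x : ℝ) : mink x = ∑' k, minkTerm x k := rfl

lemma abs_minkTerm_le {x : ℝ} (hx : x ∈ Icc (0 : ℝ) 1) (k : ℕ) : |minkTerm x k| ≤ 2⁻¹ ^ k := by
  unfold minkTerm
  split_ifs with hk
  · simp
  · have hsum : (k : ℤ) + 1 ≤ cfSum (k + 1) x := by exact_mod_cast succ_le_cfSum hx hk
    rw [abs_mul, abs_pow, abs_neg, abs_one, one_pow, one_mul, abs_of_pos (by positivity),
      inv_pow, ← zpow_natCast, ← zpow_neg]
    exact zpow_le_zpow_right₀ one_le_two (by omega)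

lemma summable_minkTerm {x : ℝ} (hx : x ∈ Icc (0 : ℝ) 1) : Summable (minkTerm x) :=
  .of_norm_bounded (summable_geometric_of_lt_one (by norm_num) (by norm_num)) (abs_minkTerm_le hx)

lemma abs_mink_le_two {x : ℝ} (hx : x ∈ Icc (0 : ℝ) 1) : |mink x| ≤ 2 := by
  have hgeom := summable_geometric_of_lt_one (r := (2 : ℝ)⁻¹) (by norm_num) (by norm_num)
  calc |mink x| ≤ ∑' k : ℕ, (2 : ℝ)⁻¹ ^ k :=
        tsum_of_norm_bounded (f := minkTerm x) hgeom.hasSum (abs_minkTerm_le hx)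
    _ = 2 := by rw [tsum_geometric_of_lt_one (by norm_num) (by norm_num)]; norm_num

lemma mink_zero : mink 0 = 0 := by
  simp [mink_eq_tsum_minkTerm, minkTerm, iterate_gaussMap_zero]

lemma mink_eq_of_ne_zero {x : ℝ} (hx : x ∈ Icc (0 : ℝ) 1) (hx0 : x ≠ 0) :
    mink x = 2⁻¹ ^ ⌊x⁻¹⌋₊ * (2 - mink (gaussMap x)) := by
  have hpow (n : ℕ) : (2 : ℝ) ^ ((1 : ℤ) - ((⌊x⁻¹⌋₊ + n : ℕ) : ℤ)) =
      2⁻¹ ^ ⌊x⁻¹⌋₊ * 2 ^ ((1 : ℤ) - n) := by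
    rw [inv_pow, ← zpow_natCast, ← zpow_neg, ← zpow_add₀ two_ne_zero]
    push_cast
    ring_nf
  have hhead : minkTerm x 0 = 2⁻¹ ^ ⌊x⁻¹⌋₊ * 2 := by
    simpa [minkTerm, hx0, cfSum, cfDigit] using hpow 0
  have htail (k : ℕ) : minkTerm x (k + 1) = -(2⁻¹ ^ ⌊x⁻¹⌋₊ * minkTerm (gaussMap x) k) := by
    simp only [minkTerm, Function.iterate_succ_apply, cfSum_succ (k + 1), hpow]
    split_ifs <;> ring
  rw [mink_eq_tsum_minkTerm, (summable_minkTerm hx).tsum_eq_zero_add, hhead, tsum_congr htail,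
    tsum_neg, tsum_mul_left, ← mink_eq_tsum_minkTerm]
  ring

lemma continuousOn_Icc_of_continuousOn_Icc_inv_succ {β : Type*} [TopologicalSpace β] {g : ℝ → β}
    (h0 : ContinuousWithinAt g (Icc 0 1) 0)
    (hg : ∀ n : ℕ, ContinuousOn g (Icc ((n + 2 : ℝ)⁻¹) ((n + 1 : ℝ)⁻¹))) :
    ContinuousOn g (Icc 0 1) := by
  have htail (N : ℕ) : ContinuousOn g (Icc ((N + 1 : ℝ)⁻¹) 1) := by
    induction N with
    | zero => simp [continuousOn_singleton]
    | succ N ih =>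
      have hsplit : Icc ((N + 2 : ℝ)⁻¹) ((N + 1 : ℝ)⁻¹) ∪ Icc ((N + 1 : ℝ)⁻¹) 1 =
          Icc ((N + 2 : ℝ)⁻¹) 1 :=
        Icc_union_Icc_eq_Icc (by gcongr; linarith) (inv_le_one_of_one_le₀ (by linarith))
      push_cast
      rw [add_assoc, one_add_one_eq_two, ← hsplit]
      exact (hg N).union_of_isClosed ih isClosed_Icc isClosed_Icc
  intro x hx
  rcases hx.1.eq_or_lt with rfl | hxpos
  · exact h0
  obtain ⟨N, hN⟩ := exists_nat_one_div_lt hxpos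
  rw [one_div] at hN
  refine (htail N x ⟨hN.le, hx.2⟩).mono_of_mem_nhdsWithin ?_
  exact mem_nhdsWithin.2 ⟨Ioi _, isOpen_Ioi, hN, fun y hy => ⟨hy.1.le, hy.2.2⟩⟩

lemma inv_mem_Icc_of_mem_Icc_inv {a b x : ℝ} (ha : 0 < a) (hb : 0 < b)
    (hx : x ∈ Icc b⁻¹ a⁻¹) : x⁻¹ ∈ Icc a b := by
  have hxpos : 0 < x := (inv_pos.2 hb).trans_le hx.1
  exact ⟨(le_inv_comm₀ hxpos ha).1 hx.2, (inv_le_comm₀ hb hxpos).1 hx.1⟩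

noncomputable def minkOp (f : ℝ → ℝ) (x : ℝ) : ℝ :=
  if x = 0 then 0 else 2⁻¹ ^ ⌊x⁻¹⌋₊ * (2 - f (gaussMap x))

lemma minkOp_zero (f : ℝ → ℝ) : minkOp f 0 = 0 := if_pos rfl

lemma minkOp_one {f : ℝ → ℝ} (h0 : f 0 = 0) : minkOp f 1 = 1 := by
  norm_num [minkOp, gaussMap, h0]

lemma minkOp_mink {x : ℝ} (hx : x ∈ Icc (0 : ℝ) 1) : minkOp mink x = mink x := by
  rcases eq_or_ne x 0 with rfl | hx0
  · rw [minkOp_zero, mink_zero]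
  · rw [minkOp, if_neg hx0, mink_eq_of_ne_zero hx hx0]

lemma abs_minkOp_sub_le {f g : ℝ → ℝ} {c : ℝ} (h : ∀ y ∈ Icc (0 : ℝ) 1, |f y - g y| ≤ c)
    {x : ℝ} (hx : x ∈ Icc (0 : ℝ) 1) : |minkOp f x - minkOp g x| ≤ c / 2 := by
  rcases hx.1.eq_or_lt with rfl | hxpos
  · have hc := (abs_nonneg _).trans (h 0 ⟨le_rfl, zero_le_one⟩)
    simp only [minkOp_zero, sub_self, abs_zero]
    linarith
  have ha : 1 ≤ ⌊x⁻¹⌋₊ := Nat.le_floor (by exact_mod_cast one_le_inv_iff₀.2 ⟨hxpos, hx.2⟩)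
  have hT := h (gaussMap x) (Ico_subset_Icc_self (gaussMap_mem_Ico x))
  rw [minkOp, minkOp, if_neg hxpos.ne', if_neg hxpos.ne', ← mul_sub, abs_mul,
    abs_of_pos (by positivity), sub_sub_sub_cancel_left, abs_sub_comm]
  calc 2⁻¹ ^ ⌊x⁻¹⌋₊ * |f (gaussMap x) - g (gaussMap x)| ≤ 2⁻¹ ^ 1 * c :=
        mul_le_mul (pow_le_pow_of_le_one (by norm_num) (by norm_num) ha) hT (abs_nonneg _)
          (by norm_num)
    _ = c / 2 := by ring

lemma abs_minkOp_le {f : ℝ → ℝ} {M : ℝ} (hM : ∀ y ∈ Icc (0 : ℝ) 1, |f y| ≤ M)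
    {x : ℝ} (hx : x ∈ Icc (0 : ℝ) 1) : |minkOp f x| ≤ (2 + M) * x := by
  rcases hx.1.eq_or_lt with rfl | hxpos
  · simp [minkOp_zero]
  have hT := hM (gaussMap x) (Ico_subset_Icc_self (gaussMap_mem_Ico x))
  -- `x⁻¹ < ⌊x⁻¹⌋₊ + 1 ≤ 2 ^ ⌊x⁻¹⌋₊`
  have hpow : 2⁻¹ ^ ⌊x⁻¹⌋₊ ≤ x := by
    rw [inv_pow, inv_le_comm₀ (by positivity) hxpos]
    exact (Nat.lt_floor_add_one _).le.trans (by exact_mod_cast Nat.lt_two_pow_self)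
  rw [minkOp, if_neg hxpos.ne', abs_mul, abs_of_pos (by positivity)]
  have hbound : |2 - f (gaussMap x)| ≤ 2 + M :=
    (abs_sub _ _).trans (by rw [abs_two]; linarith)
  calc 2⁻¹ ^ ⌊x⁻¹⌋₊ * |2 - f (gaussMap x)| ≤ x * (2 + M) :=
        mul_le_mul hpow hbound (abs_nonneg _) hx.1
    _ = (2 + M) * x := mul_comm _ _

lemma minkOp_eq_of_mem_Icc {f : ℝ → ℝ} (h0 : f 0 = 0) (h1 : f 1 = 1) {n : ℕ} {x : ℝ}
    (hx : x ∈ Icc ((n + 2 : ℝ)⁻¹) ((n + 1 : ℝ)⁻¹)) :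
    minkOp f x = 2⁻¹ ^ (n + 1) * (2 - f (x⁻¹ - (n + 1))) := by
  have hxpos : 0 < x := lt_of_lt_of_le (by positivity) hx.1
  obtain ⟨hlo, hhi⟩ := inv_mem_Icc_of_mem_Icc_inv (by positivity) (by positivity) hx
  rw [minkOp, if_neg hxpos.ne', gaussMap_eq_inv_sub_floor hxpos.le]
  rcases hhi.lt_or_eq with hlt | heq
  · have ha : ⌊x⁻¹⌋₊ = n + 1 :=
      (Nat.floor_eq_iff (by positivity)).2 ⟨by exact_mod_cast hlo, by push_cast; linarith⟩
    rw [ha]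
    push_cast
    rfl
  · -- `x = 1/(n+2)`, where the Gauss map jumps from `1` back to `0`
    have ha : ⌊x⁻¹⌋₊ = n + 2 := by rw [heq]; exact_mod_cast Nat.floor_natCast (n + 2)
    rw [ha, heq, show (n + 2 : ℝ) - (n + 1) = 1 by ring, h1]
    push_cast
    rw [sub_self, h0]
    ring

lemma continuousOn_minkOp {f : ℝ → ℝ} (hf : ContinuousOn f (Icc 0 1)) (h0 : f 0 = 0)
    (h1 : f 1 = 1) : ContinuousOn (minkOp f) (Icc 0 1) := by
  obtain ⟨M, hM⟩ := isCompact_Icc.exists_bound_of_continuousOn hf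
  refine continuousOn_Icc_of_continuousOn_Icc_inv_succ ?_ fun n => ?_
  · have hlin : Tendsto (fun x : ℝ => (2 + M) * x) (𝓝[Icc 0 1] 0) (𝓝 0) :=
      (Continuous.tendsto' (by fun_prop) 0 0 (mul_zero _)).mono_left nhdsWithin_le_nhds
    rw [ContinuousWithinAt, minkOp_zero]
    exact squeeze_zero_norm' (eventually_nhdsWithin_of_forall fun x hx => abs_minkOp_le hM hx) hlin
  · have hpos : ∀ x ∈ Icc ((n + 2 : ℝ)⁻¹) ((n + 1 : ℝ)⁻¹), x ≠ 0 := fun x hx =>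
      (lt_of_lt_of_le (by positivity) hx.1).ne'
    have hmaps : MapsTo (fun x : ℝ => x⁻¹ - (n + 1)) (Icc ((n + 2 : ℝ)⁻¹) ((n + 1 : ℝ)⁻¹))
        (Icc 0 1) := fun x hx => by
      obtain ⟨hlo, hhi⟩ := inv_mem_Icc_of_mem_Icc_inv (by positivity) (by positivity) hx
      constructor <;> linarith
    refine ContinuousOn.congr ?_ fun x hx => minkOp_eq_of_mem_Icc h0 h1 hx
    exact continuousOn_const.mul (continuousOn_const.sub
      (hf.comp ((continuousOn_inv₀.mono hpos).sub continuousOn_const) hmaps))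

lemma continuousOn_iterate_minkOp (n : ℕ) {f : ℝ → ℝ} (hf : ContinuousOn f (Icc 0 1))
    (h0 : f 0 = 0) (h1 : f 1 = 1) : ContinuousOn (minkOp^[n] f) (Icc 0 1) := by
  induction n generalizing f with
  | zero => exact hf
  | succ n ih => exact ih (continuousOn_minkOp hf h0 h1) (minkOp_zero f) (minkOp_one h0)

lemma abs_iterate_minkOp_sub_mink_le {f : ℝ → ℝ} {c : ℝ}
    (hf : ∀ y ∈ Icc (0 : ℝ) 1, |f y - mink y| ≤ c) (n : ℕ) :
    ∀ x ∈ Icc (0 : ℝ) 1, |minkOp^[n] f x - mink x| ≤ c * 2⁻¹ ^ n := by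
  induction n with
  | zero => simpa using hf
  | succ n ih =>
    intro x hx
    rw [Function.iterate_succ_apply', ← minkOp_mink hx, pow_succ, ← mul_assoc, ← div_eq_mul_inv]
    exact abs_minkOp_sub_le ih hx

lemma tendstoUniformlyOn_iterate_minkOp {f : ℝ → ℝ} {c : ℝ}
    (hf : ∀ y ∈ Icc (0 : ℝ) 1, |f y - mink y| ≤ c) :
    TendstoUniformlyOn (fun n => minkOp^[n] f) mink atTop (Icc 0 1) := by
  rw [Metric.tendstoUniformlyOn_iff]
  intro ε hε
  have hgeom : Tendsto (fun n : ℕ => c * 2⁻¹ ^ n) atTop (𝓝 0) := by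
    simpa using (tendsto_pow_atTop_nhds_zero_of_lt_one (r := (2 : ℝ)⁻¹) (by norm_num)
      (by norm_num)).const_mul c
  filter_upwards [hgeom.eventually (gt_mem_nhds hε)] with n hn x hx
  rw [dist_comm, Real.dist_eq]
  exact (abs_iterate_minkOp_sub_mink_le hf n x hx).trans_lt hn

/-- Minkowski's question mark function is continuous on `[0,1]`. -/
theorem mink_continuousOn : ContinuousOn mink (Icc (0 : ℝ) 1) := by
  have hid : ∀ y ∈ Icc (0 : ℝ) 1, |id y - mink y| ≤ 3 := fun y hy =>
    (abs_sub _ _).trans (by rw [id, abs_of_nonneg hy.1]; linarith [hy.2, abs_mink_le_two hy])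
  exact (tendstoUniformlyOn_iterate_minkOp hid).continuousOn
    (Frequently.of_forall fun n => continuousOn_iterate_minkOp n continuousOn_id rfl rfl)
end

section
/- The Minkowski–Stieltjes measure μ is singular with respect to Lebesgue measure on [0,1] (equivalently, ?'(x) = 0 for Lebesgue-almost every x). -/
open MeasureTheory Set

open Filter
open scoped ENNReal Finset

/-!
Group the continued fraction digits of `x` into consecutive pairs. By bounded distortion of the
Möbius inverse branches, the pair `(1, 1)` fills at most a sixth of the Lebesgue measure of every
cylinder, while `μ` gives the cylinder of digits `a₁, …, a_n` mass at most `2^{-(a₁+⋯+a_n)}`,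
so `(1, 1)` carries a quarter of the `μ`-mass. (Single digits do not separate the two measures:
both can give the digit `1` half of a cylinder.) Exponential Markov bounds, summed over all
cylinders of depth `5 j`, show that more than `j` pairs `(1, 1)` among the first `5 j` is summably
rare for Lebesgue measure and at most `j` is summably rare for `μ`. By Borel–Cantelli, the two
measures are carried by disjoint sets.
-/

theorem List.ofFn_snoc {α : Type*} {m : ℕ} (w : Fin m → α) (a : α) :
    List.ofFn (Fin.snoc w a : Fin (m + 1) → α) = List.ofFn w ++ [a] := by
  rw [List.ofFn_succ', List.concat_eq_append, Fin.snoc_last]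
  simp only [Fin.snoc_castSucc]

theorem mobius_sub {p q r s α β : ℝ} (hα : q + s * α ≠ 0) (hβ : q + s * β ≠ 0) :
    (p + r * β) / (q + s * β) - (p + r * α) / (q + s * α)
      = (q * r - p * s) * (β - α) / ((q + s * α) * (q + s * β)) := by
  rw [div_sub_div _ _ hβ hα]
  congr 1 <;> ring

theorem ENNReal.tsum_fin_succ_eq {α : Type*} {m : ℕ} (F : (Fin (m + 1) → α) → ℝ≥0∞) :
    ∑' v, F v = ∑' (w : Fin m → α) (a : α), F (Fin.snoc w a) := by
  rw [← (Fin.snocEquiv fun _ => α).tsum_eq, ENNReal.tsum_prod', ENNReal.tsum_comm]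
  rfl

theorem ENNReal.tsum_prod_mul_le_pow {α : Type*} (φ : α → ℝ≥0∞) (g : List α → ℝ≥0∞)
    {K : ℝ≥0∞} (h : ∀ L, ∑' a, φ a * g (L ++ [a]) ≤ K * g L) (m : ℕ) :
    ∑' v : Fin m → α, (∏ i, φ (v i)) * g (List.ofFn v) ≤ K ^ m * g [] := by
  induction m with
  | zero => simp
  | succ m ih =>
    calc ∑' v : Fin (m + 1) → α, (∏ i, φ (v i)) * g (List.ofFn v)
        = ∑' w : Fin m → α, (∏ i, φ (w i)) * ∑' a, φ a * g (List.ofFn w ++ [a]) := by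
          rw [tsum_fin_succ_eq]
          refine tsum_congr fun w => ?_
          rw [← ENNReal.tsum_mul_left]
          refine tsum_congr fun a => ?_
          simp only [Fin.prod_univ_castSucc, Fin.snoc_castSucc, Fin.snoc_last, List.ofFn_snoc]
          ring
      _ ≤ ∑' w : Fin m → α, (∏ i, φ (w i)) * (K * g (List.ofFn w)) :=
          ENNReal.tsum_le_tsum fun w => mul_le_mul_right (h _) _
      _ = K * ∑' w : Fin m → α, (∏ i, φ (w i)) * g (List.ofFn w) := by
          rw [← ENNReal.tsum_mul_left]
          exact tsum_congr fun w => by ring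
      _ ≤ K ^ (m + 1) * g [] := by
          rw [pow_succ', mul_assoc]
          exact mul_le_mul_right ih _

theorem ENNReal.tsum_ne_top_of_le_geometric {u : ℕ → ℝ≥0∞} {C ρ : ℝ≥0∞} (hC : C ≠ ⊤)
    (hρ : ρ < 1) (h : ∀ j, u j ≤ C * ρ ^ j) : ∑' j, u j ≠ ⊤ := by
  refine ne_top_of_le_ne_top ?_ (ENNReal.tsum_le_tsum h)
  rw [ENNReal.tsum_mul_left, ENNReal.tsum_geometric]
  exact ENNReal.mul_ne_top hC (ENNReal.inv_ne_top.mpr (tsub_pos_of_lt hρ).ne')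

namespace Minkowski

theorem gaussMap_zero : gaussMap 0 = 0 := if_pos rfl

theorem gaussMap_of_ne_zero {x : ℝ} (hx : x ≠ 0) : gaussMap x = Int.fract x⁻¹ := if_neg hx

theorem gaussMap_mem_Ico (x : ℝ) : gaussMap x ∈ Ico (0 : ℝ) 1 := by
  unfold gaussMap
  split_ifs
  · exact ⟨le_rfl, one_pos⟩
  · exact ⟨Int.fract_nonneg _, Int.fract_lt_one _⟩

theorem iterate_gaussMap_zero (k : ℕ) : gaussMap^[k] 0 = 0 :=
  Function.iterate_fixed gaussMap_zero k

theorem iterate_gaussMap_ne_zero {x : ℝ} {i k : ℕ} (hik : i ≤ k) (h : gaussMap^[k] x ≠ 0) :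
    gaussMap^[i] x ≠ 0 := by
  obtain ⟨j, rfl⟩ := Nat.exists_eq_add_of_le hik
  intro h0
  rw [Nat.add_comm, Function.iterate_add_apply, h0, iterate_gaussMap_zero] at h
  exact h rfl

theorem iterate_gaussMap_mem_Icc {x : ℝ} (hx : x ∈ Icc (0 : ℝ) 1) :
    ∀ k, gaussMap^[k] x ∈ Icc (0 : ℝ) 1
  | 0 => hx
  | k + 1 => by
    rw [Function.iterate_succ_apply']
    exact Ico_subset_Icc_self (gaussMap_mem_Ico _)

theorem one_le_cfDigit {x : ℝ} (hx : x ∈ Icc (0 : ℝ) 1) {k : ℕ} (h : gaussMap^[k] x ≠ 0) :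
    1 ≤ cfDigit k x := by
  obtain ⟨h0, h1⟩ := iterate_gaussMap_mem_Icc hx k
  exact Nat.le_floor (by exact_mod_cast (one_le_inv₀ (h0.lt_of_ne' h)).mpr h1)

theorem le_cfSum {x : ℝ} (hx : x ∈ Icc (0 : ℝ) 1) {k : ℕ} (h : gaussMap^[k] x ≠ 0) :
    k + 1 ≤ cfSum (k + 1) x := by
  calc k + 1 = ∑ _i ∈ Finset.range (k + 1), 1 := by simp
    _ ≤ cfSum (k + 1) x := Finset.sum_le_sum fun i hi =>
      one_le_cfDigit hx (iterate_gaussMap_ne_zero (Finset.mem_range_succ_iff.mp hi) h)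

noncomputable def salemTerm (x : ℝ) (k : ℕ) : ℝ :=
  if gaussMap^[k] x = 0 then 0 else
    (-1 : ℝ) ^ k * (2 : ℝ) ^ ((1 : ℤ) - (cfSum (k + 1) x : ℤ))

theorem mink_eq_tsum_salemTerm (x : ℝ) : mink x = ∑' k, salemTerm x k := rfl

theorem abs_salemTerm_le {x : ℝ} (hx : x ∈ Icc (0 : ℝ) 1) (k : ℕ) :
    |salemTerm x k| ≤ 2⁻¹ ^ k := by
  unfold salemTerm
  split_ifs with h
  · simp
  · have hS : (k : ℤ) + 1 ≤ cfSum (k + 1) x := by exact_mod_cast le_cfSum hx h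
    rw [abs_mul, abs_pow, abs_neg, abs_one, one_pow, one_mul, abs_of_pos (by positivity),
      inv_pow, ← zpow_natCast, ← zpow_neg]
    exact zpow_le_zpow_right₀ one_le_two (by omega)

theorem summable_salemTerm {x : ℝ} (hx : x ∈ Icc (0 : ℝ) 1) : Summable (salemTerm x) :=
  Summable.of_norm_bounded (summable_geometric_of_lt_one (by norm_num) (by norm_num))
    (abs_salemTerm_le hx)

theorem mink_zero : mink 0 = 0 := by
  simp [mink_eq_tsum_salemTerm, salemTerm, iterate_gaussMap_zero]

theorem mink_one : mink 1 = 1 := by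
  have h1 : gaussMap 1 = 0 := by simp [gaussMap_of_ne_zero]
  rw [mink_eq_tsum_salemTerm, tsum_eq_single 0]
  · simp [salemTerm, cfSum, cfDigit]
  · rintro (_ | k) hk
    · exact absurd rfl hk
    · simp [salemTerm, Function.iterate_succ_apply, h1, iterate_gaussMap_zero]

theorem cfDigit_add (k n : ℕ) (x : ℝ) : cfDigit (k + n) x = cfDigit k (gaussMap^[n] x) := by
  rw [cfDigit, Function.iterate_add_apply, cfDigit]

theorem cfDigit_succ (k : ℕ) (x : ℝ) : cfDigit (k + 1) x = cfDigit k (gaussMap x) :=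
  cfDigit_add k 1 x

theorem cfSum_succ (n : ℕ) (x : ℝ) : cfSum (n + 1) x = cfSum n (gaussMap x) + cfDigit 0 x := by
  simp only [cfSum, Finset.sum_range_succ', cfDigit_succ]

theorem salemTerm_zero {x : ℝ} (hx : x ≠ 0) : salemTerm x 0 = 2 * 2⁻¹ ^ cfDigit 0 x := by
  rw [salemTerm, Function.iterate_zero_apply, if_neg hx, cfSum_succ, cfSum,
    Finset.sum_range_zero, zero_add, pow_zero, one_mul, zpow_sub₀ two_ne_zero, zpow_one,
    zpow_natCast, div_eq_mul_inv, inv_pow]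

theorem salemTerm_succ (x : ℝ) (k : ℕ) :
    salemTerm x (k + 1) = -(2⁻¹ ^ cfDigit 0 x) * salemTerm (gaussMap x) k := by
  rw [salemTerm, salemTerm, Function.iterate_succ_apply]
  split_ifs
  · ring
  · rw [cfSum_succ (k + 1), Nat.cast_add, sub_add_eq_sub_sub, zpow_sub₀ two_ne_zero,
      zpow_natCast, inv_pow, pow_succ]
    ring

theorem mink_eq_of_mem_Ioc {x : ℝ} (hx : x ∈ Ioc (0 : ℝ) 1) :
    mink x = 2 * 2⁻¹ ^ cfDigit 0 x - 2⁻¹ ^ cfDigit 0 x * mink (gaussMap x) := by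
  rw [mink_eq_tsum_salemTerm, (summable_salemTerm (Ioc_subset_Icc_self hx)).tsum_eq_zero_add,
    salemTerm_zero hx.1.ne', mink_eq_tsum_salemTerm, ← tsum_mul_left]
  simp only [salemTerm_succ, neg_mul, tsum_neg, sub_eq_add_neg]

noncomputable def cfBranch (a : ℕ) (t : ℝ) : ℝ := ((a : ℝ) + t)⁻¹

section cfBranch

variable {a : ℕ} {y : ℝ}

theorem cfBranch_mem_Ioc (ha : 1 ≤ a) (hy : 0 ≤ y) : cfBranch a y ∈ Ioc (0 : ℝ) 1 := by
  have : (1 : ℝ) ≤ a := by exact_mod_cast ha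
  exact ⟨inv_pos.mpr (by linarith), inv_le_one_of_one_le₀ (by linarith)⟩

theorem gaussMap_cfBranch (ha : 1 ≤ a) (hy : y ∈ Ico (0 : ℝ) 1) :
    gaussMap (cfBranch a y) = y := by
  rw [gaussMap_of_ne_zero (cfBranch_mem_Ioc ha hy.1).1.ne', cfBranch, inv_inv,
    ← Int.cast_natCast, Int.fract_intCast_add, Int.fract_eq_self.mpr hy]

theorem cfDigit_zero_cfBranch (hy : y ∈ Ico (0 : ℝ) 1) :
    cfDigit 0 (cfBranch a y) = a := by
  rw [cfDigit, Function.iterate_zero_apply, cfBranch, inv_inv,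
    Nat.floor_eq_iff (by linarith [hy.1, (Nat.cast_nonneg a : (0 : ℝ) ≤ a)])]
  constructor <;> linarith [hy.1, hy.2]

theorem mink_cfBranch (ha : 1 ≤ a) (hy : y ∈ Icc (0 : ℝ) 1) :
    mink (cfBranch a y) = 2 * 2⁻¹ ^ a - 2⁻¹ ^ a * mink y := by
  rcases hy.2.lt_or_eq with hy1 | rfl
  · have hy' : y ∈ Ico (0 : ℝ) 1 := ⟨hy.1, hy1⟩
    rw [mink_eq_of_mem_Ioc (cfBranch_mem_Ioc ha hy.1), gaussMap_cfBranch ha hy',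
      cfDigit_zero_cfBranch hy']
  · have h : cfBranch a 1 = cfBranch (a + 1) 0 := by simp [cfBranch]
    have h0 : (0 : ℝ) ∈ Ico 0 1 := ⟨le_rfl, one_pos⟩
    rw [h, mink_eq_of_mem_Ioc (cfBranch_mem_Ioc (by omega) le_rfl), gaussMap_cfBranch (by omega) h0,
      cfDigit_zero_cfBranch h0, mink_zero, mink_one]
    ring

theorem cfBranch_mem_Ioo (ha : 1 ≤ a) (hy : 0 < y) : cfBranch a y ∈ Ioo (0 : ℝ) 1 := by
  have : (1 : ℝ) ≤ a := by exact_mod_cast ha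
  exact ⟨inv_pos.mpr (by linarith), inv_lt_one_of_one_lt₀ (by linarith)⟩

theorem cfBranch_div {p q r s t : ℝ} (ha : 1 ≤ a) (hnum : 0 ≤ p + r * t)
    (hden : 0 < q + s * t) :
    cfBranch a ((p + r * t) / (q + s * t)) = (q + s * t) / ((a * q + p) + (a * s + r) * t) := by
  have : (1 : ℝ) ≤ a := by exact_mod_cast ha
  have hden' : 0 < (a * q + p) + (a * s + r) * t := by nlinarith
  rw [cfBranch, add_div' _ _ _ hden.ne', inv_div]
  congr 1
  ring

end cfBranch

/-- A pair `(b, c)` stands for the two consecutive continued fraction digits `b + 1, c + 1`;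
composing two (decreasing) branches gives an increasing map. -/
noncomputable def pairBranch (p : ℕ × ℕ) (t : ℝ) : ℝ :=
  cfBranch (p.1 + 1) (cfBranch (p.2 + 1) t)

theorem pairBranch_mem_Icc (p : ℕ × ℕ) {t : ℝ} (ht : 0 ≤ t) :
    pairBranch p t ∈ Icc (0 : ℝ) 1 :=
  Ioc_subset_Icc_self <| cfBranch_mem_Ioc (by omega) (cfBranch_mem_Ioc (by omega) ht).1.le

theorem pairBranch_mem_Ioo (p : ℕ × ℕ) {t : ℝ} (ht : 0 < t) :
    pairBranch p t ∈ Ioo (0 : ℝ) 1 :=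
  cfBranch_mem_Ioo (by omega) (cfBranch_mem_Ioo (by omega) ht).1

noncomputable def cylMap : List (ℕ × ℕ) → ℝ → ℝ
  | [], t => t
  | p :: L, t => pairBranch p (cylMap L t)

theorem cylMap_append (L L' : List (ℕ × ℕ)) (t : ℝ) :
    cylMap (L ++ L') t = cylMap L (cylMap L' t) := by
  induction L with
  | nil => rfl
  | cons p L ih => simp only [List.cons_append, cylMap, ih]

theorem cylMap_mem_Icc (L : List (ℕ × ℕ)) {t : ℝ} (ht : t ∈ Icc (0 : ℝ) 1) :
    cylMap L t ∈ Icc (0 : ℝ) 1 := by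
  induction L with
  | nil => exact ht
  | cons p L ih => exact pairBranch_mem_Icc p ih.1

theorem exists_cylMap_eq_div (L : List (ℕ × ℕ)) :
    ∃ p q r s : ℝ, 0 ≤ p ∧ 0 < q ∧ 0 ≤ r ∧ 0 ≤ s ∧ q * r - p * s = 1 ∧
      ∀ t, 0 ≤ t → cylMap L t = (p + r * t) / (q + s * t) := by
  induction L with
  | nil => exact ⟨0, 1, 1, 0, by norm_num, by norm_num, by norm_num, by norm_num, by norm_num,
      fun t _ => by simp [cylMap]⟩
  | cons bc L ih =>
    obtain ⟨p, q, r, s, hp, hq, hr, hs, hdet, hL⟩ := ih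
    set b : ℝ := ((bc.1 + 1 : ℕ) : ℝ)
    set c : ℝ := ((bc.2 + 1 : ℕ) : ℝ)
    have hb : 1 ≤ b := by simp [b]
    have hc : 1 ≤ c := by simp [c]
    refine ⟨c * q + p, b * (c * q + p) + q, c * s + r, b * (c * s + r) + s,
      by positivity, by positivity, by positivity, by positivity, by linear_combination hdet, ?_⟩
    intro t ht
    rw [cylMap, hL t ht, pairBranch, cfBranch_div (by omega) (by positivity) (by positivity),
      cfBranch_div (by omega) (by positivity) (by positivity)]

theorem strictMonoOn_cylMap (L : List (ℕ × ℕ)) : StrictMonoOn (cylMap L) (Ici 0) := by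
  obtain ⟨p, q, r, s, -, hq, -, hs, hdet, hL⟩ := exists_cylMap_eq_div L
  intro α hα β hβ hαβ
  have hα' : 0 < q + s * α := by nlinarith [mem_Ici.mp hα]
  have hβ' : 0 < q + s * β := by nlinarith [mem_Ici.mp hβ]
  rw [← sub_pos, hL α hα, hL β hβ, mobius_sub hα'.ne' hβ'.ne', hdet, one_mul]
  exact div_pos (sub_pos.mpr hαβ) (mul_pos hα' hβ')

theorem continuousOn_cylMap (L : List (ℕ × ℕ)) : ContinuousOn (cylMap L) (Ici 0) := by
  obtain ⟨p, q, r, s, -, hq, -, hs, -, hL⟩ := exists_cylMap_eq_div L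
  refine ContinuousOn.congr ?_ fun t ht => hL t ht
  exact (by fun_prop : Continuous fun t => p + r * t).continuousOn.div (by fun_prop)
    fun t ht => by nlinarith [mem_Ici.mp ht]

theorem cylMap_sub_le (L : List (ℕ × ℕ)) {α β : ℝ} (hα : 0 ≤ α) (hαβ : α ≤ β)
    (h : 1 ≤ α + β) : cylMap L β - cylMap L α ≤ (β - α) * (cylMap L 1 - cylMap L 0) := by
  obtain ⟨p, q, r, s, -, hq, -, hs, hdet, hL⟩ := exists_cylMap_eq_div L
  have hβ : 0 ≤ β := hα.trans hαβ
  have hα' : 0 < q + s * α := by nlinarith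
  have hβ' : 0 < q + s * β := by nlinarith
  rw [hL α hα, hL β hβ, hL 1 zero_le_one, hL 0 le_rfl, mobius_sub hα'.ne' hβ'.ne',
    mobius_sub (by positivity) (by positivity), hdet, one_mul, one_mul, sub_zero, mul_zero,
    add_zero, mul_one_div]
  refine div_le_div_of_nonneg_left (sub_nonneg.mpr hαβ) (by positivity) ?_
  nlinarith [mul_nonneg (mul_nonneg hq.le hs) (sub_nonneg.mpr h),
    mul_nonneg (mul_nonneg hs hs) (mul_nonneg hα hβ)]

/-- The cylinder of all `x ∈ (0, 1)` whose continued fraction starts with the digit pairs `L`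
(up to countably many rational points). -/
def cylinder (L : List (ℕ × ℕ)) : Set ℝ := cylMap L '' Ioo 0 1

theorem cylinder_eq_Ioo (L : List (ℕ × ℕ)) : cylinder L = Ioo (cylMap L 0) (cylMap L 1) :=
  ((continuousOn_cylMap L).mono Icc_subset_Ici_self).image_Ioo_of_strictMonoOn zero_le_one
    ((strictMonoOn_cylMap L).mono Icc_subset_Ici_self)

theorem cylinder_append (L : List (ℕ × ℕ)) (p : ℕ × ℕ) :
    cylinder (L ++ [p]) = cylMap L '' (pairBranch p '' Ioo 0 1) := by
  rw [cylinder, ← image_comp]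
  exact image_congr fun t _ => cylMap_append L [p] t

theorem cylinder_append_subset (L : List (ℕ × ℕ)) (p : ℕ × ℕ) :
    cylinder (L ++ [p]) ⊆ cylinder L := by
  rw [cylinder_append]
  exact image_mono (image_subset_iff.mpr fun t ht => pairBranch_mem_Ioo p ht.1)

theorem volume_cylinder (L : List (ℕ × ℕ)) :
    volume (cylinder L) = ENNReal.ofReal (cylMap L 1 - cylMap L 0) := by
  rw [cylinder_eq_Ioo, Real.volume_Ioo]

theorem volume_cylinder_append_zero_le (L : List (ℕ × ℕ)) :
    volume (cylinder (L ++ [(0, 0)])) ≤ 6⁻¹ * volume (cylinder L) := by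
  have h0 : pairBranch (0, 0) 0 = 1 / 2 := by norm_num [pairBranch, cfBranch]
  have h1 : pairBranch (0, 0) 1 = 2 / 3 := by norm_num [pairBranch, cfBranch]
  rw [volume_cylinder, volume_cylinder, cylMap_append, cylMap_append, cylMap, cylMap, cylMap,
    cylMap, h0, h1, ← ENNReal.ofReal_ofNat, ← ENNReal.ofReal_inv_of_pos (by norm_num),
    ← ENNReal.ofReal_mul (by norm_num)]
  refine ENNReal.ofReal_le_ofReal ((cylMap_sub_le L (by norm_num) (by norm_num) (by norm_num)).trans
    (le_of_eq (by norm_num)))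

noncomputable def pairDigit (x : ℝ) (i : ℕ) : ℕ × ℕ :=
  (cfDigit (2 * i) x - 1, cfDigit (2 * i + 1) x - 1)

theorem pairDigit_succ (x : ℝ) (i : ℕ) :
    pairDigit x (i + 1) = pairDigit (gaussMap^[2] x) i := by
  rw [pairDigit, pairDigit, ← cfDigit_add, ← cfDigit_add]
  ring_nf

theorem pairDigit_pairBranch (p : ℕ × ℕ) {y : ℝ} (hy : y ∈ Ioo (0 : ℝ) 1) :
    pairDigit (pairBranch p y) 0 = p := by
  have hc := Ioo_subset_Ico_self (cfBranch_mem_Ioo (a := p.2 + 1) (by omega) hy.1)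
  rw [pairDigit, mul_zero, zero_add, cfDigit_succ, pairBranch, cfDigit_zero_cfBranch hc,
    gaussMap_cfBranch (by omega) hc, cfDigit_zero_cfBranch (Ioo_subset_Ico_self hy)]
  rfl

theorem irrational_gaussMap {x : ℝ} (h : Irrational x) : Irrational (gaussMap x) := by
  rw [gaussMap_of_ne_zero h.ne_zero, ← Int.self_sub_floor]
  exact h.inv.sub_intCast _

theorem gaussMap_mem_Ioo {x : ℝ} (h : Irrational x) : gaussMap x ∈ Ioo (0 : ℝ) 1 :=
  ⟨(gaussMap_mem_Ico x).1.lt_of_ne' (irrational_gaussMap h).ne_zero, (gaussMap_mem_Ico x).2⟩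

theorem iterate_gaussMap_mem_Ioo {x : ℝ} (hx : x ∈ Ioo (0 : ℝ) 1) (h : Irrational x)
    (n : ℕ) : gaussMap^[n] x ∈ Ioo (0 : ℝ) 1 ∧ Irrational (gaussMap^[n] x) :=
  Function.Iterate.rec (fun y => y ∈ Ioo (0 : ℝ) 1 ∧ Irrational y)
    ⟨hx, h⟩ (fun _ hy => ⟨gaussMap_mem_Ioo hy.2, irrational_gaussMap hy.2⟩) n

theorem cfBranch_cfDigit_zero {x : ℝ} (hx : 0 < x) : cfBranch (cfDigit 0 x) (gaussMap x) = x := by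
  rw [cfBranch, cfDigit, Function.iterate_zero_apply, gaussMap_of_ne_zero hx.ne',
    natCast_floor_eq_intCast_floor (inv_nonneg.mpr hx.le), Int.floor_add_fract, inv_inv]

theorem pairBranch_pairDigit_zero {x : ℝ} (hx : x ∈ Ioo (0 : ℝ) 1) (h : Irrational x) :
    pairBranch (pairDigit x 0) (gaussMap^[2] x) = x := by
  have hgx := gaussMap_mem_Ioo h
  have hd0 := one_le_cfDigit (Ioo_subset_Icc_self hx) (k := 0) hx.1.ne'
  have hd1 := one_le_cfDigit (Ioo_subset_Icc_self hgx) (k := 0) hgx.1.ne'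
  rw [pairBranch, pairDigit, mul_zero, zero_add, cfDigit_succ, Nat.sub_add_cancel hd0,
    Nat.sub_add_cancel hd1, Function.iterate_succ_apply, Function.iterate_one,
    cfBranch_cfDigit_zero hgx.1, cfBranch_cfDigit_zero hx.1]

theorem cylMap_pairDigit {x : ℝ} (hx : x ∈ Ioo (0 : ℝ) 1) (h : Irrational x) (m : ℕ) :
    cylMap (List.ofFn fun i : Fin m => pairDigit x i) (gaussMap^[2 * m] x) = x := by
  induction m generalizing x with
  | zero => rfl
  | succ m ih =>
    obtain ⟨hx2, h2⟩ := iterate_gaussMap_mem_Ioo hx h 2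
    simp only [List.ofFn_succ, Fin.val_succ, pairDigit_succ, cylMap, Fin.val_zero]
    rw [mul_add, mul_one, Function.iterate_add_apply, ih hx2 h2, pairBranch_pairDigit_zero hx h]

theorem mem_cylinder_pairDigit {x : ℝ} (hx : x ∈ Ioo (0 : ℝ) 1) (h : Irrational x) (m : ℕ) :
    x ∈ cylinder (List.ofFn fun i : Fin m => pairDigit x i) :=
  ⟨_, (iterate_gaussMap_mem_Ioo hx h _).1, cylMap_pairDigit hx h m⟩

theorem disjoint_cylinder_append (L : List (ℕ × ℕ)) {p p' : ℕ × ℕ} (hp : p ≠ p') :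
    Disjoint (cylinder (L ++ [p])) (cylinder (L ++ [p'])) := by
  have hsub (q : ℕ × ℕ) : pairBranch q '' Ioo 0 1 ⊆ Ici 0 :=
    image_subset_iff.mpr fun t ht => (pairBranch_mem_Ioo q ht.1).1.le
  rw [cylinder_append, cylinder_append]
  refine Disjoint.image ?_ (strictMonoOn_cylMap L).injOn (hsub p) (hsub p')
  rw [Set.disjoint_left]
  rintro _ ⟨y, hy, rfl⟩ ⟨y', hy', h⟩
  exact hp (by rw [← pairDigit_pairBranch p hy, ← h, pairDigit_pairBranch p' hy'])

theorem measurableSet_cylinder (L : List (ℕ × ℕ)) : MeasurableSet (cylinder L) :=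
  cylinder_eq_Ioo L ▸ measurableSet_Ioo

theorem tsum_volume_cylinder_append_le (c : ℝ≥0∞) (L : List (ℕ × ℕ)) :
    ∑' p, (if p = (0, 0) then 1 + c else 1) * volume (cylinder (L ++ [p]))
      ≤ (1 + c * 6⁻¹) * volume (cylinder L) := by
  have hsplit (p : ℕ × ℕ) : (if p = (0, 0) then 1 + c else 1) * volume (cylinder (L ++ [p]))
      = volume (cylinder (L ++ [p]))
        + if p = (0, 0) then c * volume (cylinder (L ++ [p])) else 0 := by
    split_ifs <;> ring
  have hchildren : ∑' p, volume (cylinder (L ++ [p])) ≤ volume (cylinder L) := by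
    rw [← measure_iUnion (fun p p' hp => disjoint_cylinder_append L hp)
      fun p => measurableSet_cylinder _]
    exact measure_mono (iUnion_subset (cylinder_append_subset L))
  rw [tsum_congr hsplit, ENNReal.tsum_add, tsum_ite_eq]
  calc _ ≤ volume (cylinder L) + c * (6⁻¹ * volume (cylinder L)) :=
        add_le_add hchildren (mul_le_mul_right (volume_cylinder_append_zero_le L) _)
    _ = (1 + c * 6⁻¹) * volume (cylinder L) := by ring

/-- The sum of the continued fraction digits encoded by `L`. -/
def digitSum (L : List (ℕ × ℕ)) : ℕ := (L.map fun p => p.1 + p.2 + 2).sum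

theorem tsum_inv_two_pow_add_add_two :
    ∑' p : ℕ × ℕ, (2⁻¹ : ℝ≥0∞) ^ (p.1 + p.2 + 2) = 1 := by
  have hgeom : ∑' n : ℕ, (2⁻¹ : ℝ≥0∞) ^ (n + 1) = 1 := by
    rw [ENNReal.tsum_geometric_add_one, ENNReal.one_sub_inv_two,
      ENNReal.mul_inv_cancel (by norm_num) (by norm_num)]
  rw [ENNReal.tsum_prod (f := fun b c : ℕ => (2⁻¹ : ℝ≥0∞) ^ (b + c + 2))]
  have hsplit (b c : ℕ) :
      (2⁻¹ : ℝ≥0∞) ^ (b + c + 2) = 2⁻¹ ^ (b + 1) * 2⁻¹ ^ (c + 1) := by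
    rw [← pow_add]
    ring_nf
  simp only [hsplit, ENNReal.tsum_mul_left, hgeom, mul_one]

theorem tsum_ite_mul_inv_two_pow (s : ℝ≥0∞) :
    ∑' p : ℕ × ℕ, (if p = (0, 0) then s else 1) * (2⁻¹ : ℝ≥0∞) ^ (p.1 + p.2 + 2)
      = s * 4⁻¹ + 3 * 4⁻¹ := by
  have h4 : (2⁻¹ : ℝ≥0∞) ^ 2 = 4⁻¹ := by rw [← ENNReal.inv_pow]; norm_num
  set R := ∑' p : ℕ × ℕ, if p = (0, 0) then 0 else (2⁻¹ : ℝ≥0∞) ^ (p.1 + p.2 + 2)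
  have htotal : 4⁻¹ + R = 4⁻¹ + 3 * 4⁻¹ := by
    rw [← one_add_mul, show (1 + 3 : ℝ≥0∞) = 4 by norm_num,
      ENNReal.mul_inv_cancel (by norm_num) (by norm_num),
      ← tsum_inv_two_pow_add_add_two, ENNReal.tsum_eq_add_tsum_ite (0, 0)]
    simp only [h4, R, add_zero]
    exact congrArg _ (tsum_congr fun p => by congr)
  rw [← (ENNReal.add_right_inj (by norm_num)).mp htotal, ENNReal.tsum_eq_add_tsum_ite (0, 0)]
  simp only [if_true, h4, R]
  congr 1
  exact tsum_congr fun p => by split_ifs <;> simp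

theorem digitSum_cons (p : ℕ × ℕ) (L : List (ℕ × ℕ)) :
    digitSum (p :: L) = p.1 + p.2 + 2 + digitSum L := by
  simp [digitSum]

theorem digitSum_append_singleton (L : List (ℕ × ℕ)) (p : ℕ × ℕ) :
    digitSum (L ++ [p]) = digitSum L + (p.1 + p.2 + 2) := by
  simp [digitSum]

theorem tsum_ite_mul_inv_two_pow_digitSum (s : ℝ≥0∞) (L : List (ℕ × ℕ)) :
    ∑' p, (if p = (0, 0) then s else 1) * (2⁻¹ : ℝ≥0∞) ^ digitSum (L ++ [p])
      = (s * 4⁻¹ + 3 * 4⁻¹) * 2⁻¹ ^ digitSum L := by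
  simp only [digitSum_append_singleton, pow_add, ← tsum_ite_mul_inv_two_pow,
    ← ENNReal.tsum_mul_right]
  exact tsum_congr fun p => by ring

theorem exists_mink_cylMap (L : List (ℕ × ℕ)) :
    ∃ c : ℝ, ∀ t ∈ Icc (0 : ℝ) 1,
      mink (cylMap L t) = c + 2⁻¹ ^ digitSum L * mink t := by
  induction L with
  | nil => exact ⟨0, fun t _ => by simp [cylMap, digitSum]⟩
  | cons p L ih =>
    obtain ⟨c, hc⟩ := ih
    refine ⟨2 * 2⁻¹ ^ (p.1 + 1) - 2⁻¹ ^ (p.1 + 1) * (2 * 2⁻¹ ^ (p.2 + 1) - 2⁻¹ ^ (p.2 + 1) * c),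
      fun t ht => ?_⟩
    have hL := cylMap_mem_Icc L ht
    rw [cylMap, pairBranch,
      mink_cfBranch (by omega) (Ioc_subset_Icc_self (cfBranch_mem_Ioc (by omega) hL.1)),
      mink_cfBranch (by omega) hL, hc t ht, digitSum_cons]
    ring

theorem mink_cylMap_one_sub_mink_cylMap_zero (L : List (ℕ × ℕ)) :
    mink (cylMap L 1) - mink (cylMap L 0) = 2⁻¹ ^ digitSum L := by
  obtain ⟨c, hc⟩ := exists_mink_cylMap L
  rw [hc 1 (by norm_num), hc 0 (by norm_num), mink_one, mink_zero]
  ring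

noncomputable def oneOneCount (m : ℕ) (x : ℝ) : ℕ := #{i : Fin m | pairDigit x i = (0, 0)}

theorem prod_ite_eq_pow_card {m : ℕ} (v : Fin m → ℕ × ℕ) (r : ℝ≥0∞) :
    ∏ i, (if v i = (0, 0) then r else 1) = r ^ #{i | v i = (0, 0)} := by
  simp [Finset.prod_ite]

/-- Markov's inequality for `r ^ oneOneCount m`, evaluated cylinder by cylinder. -/
theorem measure_oneOneCount_le_tsum (ν : Measure ℝ) (m : ℕ) {P : ℕ → Prop} {c r : ℝ≥0∞}
    (hP : ∀ n, P n → 1 ≤ c * r ^ n) :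
    ν {x ∈ Ioo 0 1 | Irrational x ∧ P (oneOneCount m x)}
      ≤ c * ∑' v : Fin m → ℕ × ℕ,
          (∏ i, if v i = (0, 0) then r else 1) * ν (cylinder (List.ofFn v)) := by
  calc _ ≤ ν (⋃ (v : Fin m → ℕ × ℕ) (_ : P #{i | v i = (0, 0)}),
          cylinder (List.ofFn v)) := by
        refine measure_mono ?_
        rintro x ⟨hx, hirr, hP⟩
        exact mem_iUnion₂.mpr ⟨_, hP, mem_cylinder_pairDigit hx hirr m⟩
    _ ≤ ∑' v : Fin m → ℕ × ℕ,
          ν (⋃ (_ : P #{i | v i = (0, 0)}), cylinder (List.ofFn v)) :=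
        measure_iUnion_le _
    _ ≤ ∑' v : Fin m → ℕ × ℕ,
          c * ((∏ i, if v i = (0, 0) then r else 1) * ν (cylinder (List.ofFn v))) := by
        refine ENNReal.tsum_le_tsum fun v => ?_
        by_cases h : P #{i | v i = (0, 0)}
        · rw [prod_ite_eq_pow_card, ← mul_assoc]
          simpa [h] using le_mul_of_one_le_left' (hP _ h)
        · simp [h]
    _ = _ := ENNReal.tsum_mul_left

def manyOneOnes (j : ℕ) : Set ℝ := {x ∈ Ioo 0 1 | Irrational x ∧ j < oneOneCount (5 * j) x}

def fewOneOnes (j : ℕ) : Set ℝ := {x ∈ Ioo 0 1 | Irrational x ∧ oneOneCount (5 * j) x ≤ j}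

theorem tsum_volume_manyOneOnes_ne_top : ∑' j, volume (manyOneOnes j) ≠ ⊤ := by
  -- `r⁻¹ * K ^ 5 = (4 / 5) * (25 / 24) ^ 5 ≈ 0.98`
  set r : ℝ≥0∞ := 1 + 4⁻¹
  set K : ℝ≥0∞ := 1 + 4⁻¹ * 6⁻¹
  refine ENNReal.tsum_ne_top_of_le_geometric (C := r⁻¹) (ρ := r⁻¹ * K ^ 5) (by simp [r]) ?_
    fun j => ?_
  · rw [← ENNReal.toReal_lt_toReal (by simp [r, K, ENNReal.mul_eq_top]) (by simp)]
    simp [r, K, ENNReal.toReal_add, ENNReal.toReal_mul, ENNReal.toReal_inv, ENNReal.mul_eq_top]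
    norm_num
  calc volume (manyOneOnes j)
      ≤ r⁻¹ ^ (j + 1) * ∑' v : Fin (5 * j) → ℕ × ℕ,
          (∏ i, if v i = (0, 0) then r else 1) * volume (cylinder (List.ofFn v)) := by
        refine measure_oneOneCount_le_tsum _ _ fun n (hn : j < n) => ?_
        calc 1 = r⁻¹ ^ (j + 1) * r ^ (j + 1) := by
              rw [← mul_pow, ENNReal.inv_mul_cancel (by simp [r]) (by simp [r]), one_pow]
          _ ≤ r⁻¹ ^ (j + 1) * r ^ n := mul_le_mul_right (pow_le_pow_right₀ le_self_add hn) _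
    _ ≤ r⁻¹ ^ (j + 1) * (K ^ (5 * j) * volume (cylinder [])) :=
        mul_le_mul_right (ENNReal.tsum_prod_mul_le_pow _ _ (tsum_volume_cylinder_append_le _) _) _
    _ = r⁻¹ * (r⁻¹ * K ^ 5) ^ j := by
        rw [volume_cylinder, cylMap, cylMap, sub_zero, ENNReal.ofReal_one, mul_one, pow_succ,
          pow_mul, mul_pow]
        ring

section distribution

variable {μ : Measure ℝ}
  (hdist : ∀ x ∈ Icc (0 : ℝ) 1, μ (Icc 0 x) = ENNReal.ofReal (mink x))
include hdist

theorem measure_Ioc_le {a b : ℝ} (ha : 0 ≤ a) (hab : a ≤ b) (hb : b ≤ 1) :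
    μ (Ioc a b) ≤ ENNReal.ofReal (mink b - mink a) := by
  have hsplit : μ (Icc 0 b) = μ (Icc 0 a) + μ (Ioc a b) := by
    rw [← Icc_union_Ioc_eq_Icc ha hab, measure_union _ measurableSet_Ioc]
    exact (Iic_disjoint_Ioc le_rfl).mono_left Icc_subset_Iic_self
  rw [hdist b ⟨ha.trans hab, hb⟩, hdist a ⟨ha, hab.trans hb⟩] at hsplit
  refine (ENNReal.add_le_add_iff_left (a := ENNReal.ofReal (mink a)) ENNReal.ofReal_ne_top).mp ?_
  rw [← hsplit]
  exact (le_of_eq (by ring_nf)).trans ENNReal.ofReal_add_le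

theorem measure_cylinder_le (L : List (ℕ × ℕ)) : μ (cylinder L) ≤ 2⁻¹ ^ digitSum L := by
  have h0 := cylMap_mem_Icc L (t := 0) (by norm_num)
  have h1 := cylMap_mem_Icc L (t := 1) (by norm_num)
  have h01 := strictMonoOn_cylMap L (mem_Ici.mpr le_rfl) (mem_Ici.mpr zero_le_one) one_pos
  calc μ (cylinder L) ≤ μ (Ioc (cylMap L 0) (cylMap L 1)) :=
        measure_mono (cylinder_eq_Ioo L ▸ Ioo_subset_Ioc_self)
    _ ≤ ENNReal.ofReal (2⁻¹ ^ digitSum L) := by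
        rw [← mink_cylMap_one_sub_mink_cylMap_zero]
        exact measure_Ioc_le hdist h0.1 h01.le h1.2
    _ = 2⁻¹ ^ digitSum L := by
        rw [ENNReal.ofReal_pow (by norm_num), ENNReal.ofReal_inv_of_pos two_pos,
          ENNReal.ofReal_ofNat]

theorem measure_compl_Ioc_eq_zero [IsProbabilityMeasure μ] : μ (Ioc 0 1)ᶜ = 0 := by
  have hIcc : μ (Icc (0 : ℝ) 1)ᶜ = 0 := by
    rw [prob_compl_eq_zero_iff measurableSet_Icc, hdist 1 (by norm_num), mink_one,
      ENNReal.ofReal_one]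
  have h0 : μ (Icc 0 0) = 0 := by rw [hdist 0 (by norm_num), mink_zero, ENNReal.ofReal_zero]
  refine measure_mono_null (fun x hx => ?_) (measure_union_null hIcc h0)
  by_cases h : x ∈ Icc (0 : ℝ) 1
  · exact Or.inr ⟨h.1, not_lt.mp fun h0 => hx ⟨h0, h.2⟩⟩
  · exact Or.inl h

theorem tsum_measure_fewOneOnes_ne_top : ∑' j, μ (fewOneOnes j) ≠ ⊤ := by
  -- `s⁻¹ * K ^ 5 = (4 / 3) * (15 / 16) ^ 5 ≈ 0.97`
  set s : ℝ≥0∞ := 3 / 4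
  set K : ℝ≥0∞ := s * 4⁻¹ + 3 * 4⁻¹
  have hs1 : s ≤ 1 := ENNReal.div_le_of_le_mul (by norm_num)
  refine ENNReal.tsum_ne_top_of_le_geometric (C := 1) (ρ := s⁻¹ * K ^ 5) ENNReal.one_ne_top ?_
    fun j => ?_
  · rw [← ENNReal.toReal_lt_toReal (by simp [s, K, ENNReal.mul_eq_top, ENNReal.div_eq_top])
      (by simp)]
    simp [s, K, ENNReal.toReal_add, ENNReal.toReal_mul, ENNReal.toReal_inv, ENNReal.toReal_div,
      ENNReal.mul_eq_top, ENNReal.div_eq_top]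
    norm_num
  calc μ (fewOneOnes j)
      ≤ s⁻¹ ^ j * ∑' v : Fin (5 * j) → ℕ × ℕ,
          (∏ i, if v i = (0, 0) then s else 1) * μ (cylinder (List.ofFn v)) := by
        refine measure_oneOneCount_le_tsum _ _ fun n (hn : n ≤ j) => ?_
        calc 1 = s⁻¹ ^ j * s ^ j := by
              rw [← mul_pow, ENNReal.inv_mul_cancel (by simp [s])
                (ne_top_of_le_ne_top ENNReal.one_ne_top hs1), one_pow]
          _ ≤ s⁻¹ ^ j * s ^ n := mul_le_mul_right (pow_le_pow_right_of_le_one' hs1 hn) _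
    _ ≤ s⁻¹ ^ j * ∑' v : Fin (5 * j) → ℕ × ℕ,
          (∏ i, if v i = (0, 0) then s else 1) * 2⁻¹ ^ digitSum (List.ofFn v) :=
        mul_le_mul_right (ENNReal.tsum_le_tsum fun v =>
          mul_le_mul_right (measure_cylinder_le hdist _) _) _
    _ ≤ s⁻¹ ^ j * (K ^ (5 * j) * 2⁻¹ ^ digitSum []) :=
        mul_le_mul_right (ENNReal.tsum_prod_mul_le_pow _ _
          (fun L => (tsum_ite_mul_inv_two_pow_digitSum s L).le) _) _
    _ = 1 * (s⁻¹ * K ^ 5) ^ j := by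
        rw [digitSum, List.map_nil, List.sum_nil, pow_zero, mul_one, one_mul, pow_mul, mul_pow]

end distribution

theorem mem_limsup_manyOneOnes_or_fewOneOnes {x : ℝ} (hx : x ∈ Ioo 0 1) (h : Irrational x) :
    x ∈ limsup manyOneOnes atTop ∪ limsup fewOneOnes atTop := by
  simp only [mem_union, mem_limsup_iff_frequently_mem, ← frequently_or_distrib]
  refine Frequently.of_forall fun j => ?_
  exact (lt_or_ge j (oneOneCount (5 * j) x)).imp (fun h' => ⟨hx, h, h'⟩)
    fun h' => ⟨hx, h, h'⟩

end Minkowski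

open Minkowski

theorem minkMeasure_singular_general (μ : Measure ℝ) [IsProbabilityMeasure μ]
    (hdist : ∀ x ∈ Icc (0 : ℝ) 1, μ (Icc 0 x) = ENNReal.ofReal (mink x)) :
    μ ⟂ₘ (volume : Measure ℝ) := by
  refine Measure.MutuallySingular.mk (s := (Ioc 0 1)ᶜ ∪ limsup fewOneOnes atTop)
    (t := range ((↑) : ℚ → ℝ) ∪ limsup manyOneOnes atTop)
    (measure_union_null (measure_compl_Ioc_eq_zero hdist)
      (measure_limsup_atTop_eq_zero (tsum_measure_fewOneOnes_ne_top hdist)))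
    (measure_union_null ((countable_range _).measure_zero _)
      (measure_limsup_atTop_eq_zero tsum_volume_manyOneOnes_ne_top)) fun x _ => ?_
  by_cases hx : x ∈ Ioc 0 1
  · by_cases hq : x ∈ range ((↑) : ℚ → ℝ)
    · exact Or.inr (Or.inl hq)
    · have hx1 : x ≠ 1 := fun h => hq ⟨1, by simp [h]⟩
      rcases mem_limsup_manyOneOnes_or_fewOneOnes ⟨hx.1, hx.2.lt_of_ne hx1⟩ hq with h | h
      · exact Or.inr (Or.inr h)
      · exact Or.inl (Or.inr h)
  · exact Or.inl (Or.inl hx)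

/-- The Minkowski–Stieltjes measure is singular with respect to Lebesgue measure. -/
theorem minkMeasure_singular (μ : Measure ℝ) [IsProbabilityMeasure μ]
    (hdist : ∀ x ∈ Icc (0 : ℝ) 1, μ (Icc 0 x) = ENNReal.ofReal (mink x))
    (hsupp : μ (Icc (0 : ℝ) 1) = 1) :
    μ ⟂ₘ (volume : Measure ℝ) :=
  minkMeasure_singular_general μ hdist
end
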